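/- Over the field 𝔽₂ with two elements, consider the matrices σ = [[0,1,1,0],[0,1,0,1],[1,0,1,0],[0,1,0,0]] and τ = [[0,0,1,1],[0,1,0,1],[1,0,1,0],[0,1,0,0]] in GL_4(𝔽₂). Then: (a) σ = t_{12}(1)·τ; (b) σ and τ are conjugate in GL_4(𝔽₂) (both have characteristic polynomial X⁴ + X² + 1 and are similar to the companion matrix of X⁴ + X² + 1); (c) the characteristic polynomial X⁴ + X² + 1 of σ has no root in 𝔽₂. Consequently, t_{12}(1) is a product of a conjugate of σ and a conjugate of σ⁻¹ even though χ_σ has no root in 𝔽₂ (so the converse of the root criterion fails). -/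

import Mathlib

/-! Since `σ = t₁₂(1) · τ` and `τ = ρ⁻¹ σ ρ` for an explicit `ρ ∈ GL₄(𝔽₂)`, we get
`t₁₂(1) = σ τ⁻¹ = σ · ρ⁻¹ σ⁻¹ ρ`. Conjugation preserves the characteristic polynomial, which is
`X⁴ + X² + 1` by cofactor expansion, and this polynomial takes the value `1` at both elements of
`𝔽₂`. -/

open Matrix Polynomial

namespace Matrix

variable {n R : Type*} [Fintype n] [DecidableEq n] [CommRing R]

lemma charpoly_nonsing_inv_mul_mul {ρ : Matrix n n R} (hρ : IsUnit ρ.det) (A : Matrix n n R) :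
    (ρ⁻¹ * A * ρ).charpoly = A.charpoly := by
  rw [charpoly_mul_comm, ← mul_assoc, mul_nonsing_inv _ hρ, one_mul]

lemma nonsing_inv_mul_mul_eq_of_mul_eq {ρ A B : Matrix n n R} (hρ : IsUnit ρ.det)
    (h : A * ρ = ρ * B) : ρ⁻¹ * A * ρ = B := by
  rw [mul_assoc, h, nonsing_inv_mul_cancel_left _ _ hρ]

lemma eq_mul_conj_inv_of_eq_mul_conj {T A ρ : Matrix n n R} (hA : IsUnit A.det)
    (hρ : IsUnit ρ.det) (h : A = T * (ρ⁻¹ * A * ρ)) : T = A * (ρ⁻¹ * A⁻¹ * ρ) := by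
  have hconj_det : IsUnit (ρ⁻¹ * A * ρ).det := by
    rwa [det_conj' ((isUnit_iff_isUnit_det ρ).mpr hρ)]
  have hinv : (ρ⁻¹ * A * ρ)⁻¹ = ρ⁻¹ * A⁻¹ * ρ := by
    rw [mul_inv_rev, mul_inv_rev, nonsing_inv_nonsing_inv _ hρ, mul_assoc]
  calc T = T * (ρ⁻¹ * A * ρ) * (ρ⁻¹ * A * ρ)⁻¹ := (mul_nonsing_inv_cancel_right _ _ hconj_det).symm
    _ = A * (ρ⁻¹ * A⁻¹ * ρ) := by rw [← h, hinv]

end Matrix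

lemma X_pow_four_add_X_sq_add_one_not_isRoot (a : ZMod 2) :
    ¬ (X ^ 4 + X ^ 2 + 1 : (ZMod 2)[X]).IsRoot a := by
  simp only [IsRoot, eval_add, eval_pow, eval_X, eval_one]
  revert a
  decide

abbrev σ₀ : Matrix (Fin 4) (Fin 4) (ZMod 2) := !![0,1,1,0; 0,1,0,1; 1,0,1,0; 0,1,0,0]

abbrev τ₀ : Matrix (Fin 4) (Fin 4) (ZMod 2) := !![0,0,1,1; 0,1,0,1; 1,0,1,0; 0,1,0,0]

abbrev ρ₀ : Matrix (Fin 4) (Fin 4) (ZMod 2) := !![1,0,1,1; 0,1,0,1; 1,0,0,0; 0,1,0,0]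

lemma σ₀_eq_transvection_mul_τ₀ : σ₀ = transvection (0 : Fin 4) 1 (1 : ZMod 2) * τ₀ := by
  decide

lemma isUnit_det_σ₀ : IsUnit σ₀.det := by
  rw [show σ₀.det = 1 by decide]
  exact isUnit_one

lemma isUnit_det_ρ₀ : IsUnit ρ₀.det := by
  rw [show ρ₀.det = 1 by decide]
  exact isUnit_one

lemma ρ₀_conj_σ₀ : ρ₀⁻¹ * σ₀ * ρ₀ = τ₀ :=
  nonsing_inv_mul_mul_eq_of_mul_eq isUnit_det_ρ₀ (by decide)

lemma charpoly_σ₀ : σ₀.charpoly = X ^ 4 + X ^ 2 + 1 := by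
  rw [charpoly, det_succ_row_zero]
  simp [Fin.sum_univ_succ, det_fin_three, charmatrix_apply,
    show Fin.succAbove (2 : Fin 4) 2 = 3 from rfl]
  ring_nf
  reduce_mod_char

theorem stmt9 :
    let σ : Matrix (Fin 4) (Fin 4) (ZMod 2) := !![0,1,1,0; 0,1,0,1; 1,0,1,0; 0,1,0,0]
    let τ : Matrix (Fin 4) (Fin 4) (ZMod 2) := !![0,0,1,1; 0,1,0,1; 1,0,1,0; 0,1,0,0]
    -- (a) σ = t₁₂(1) · τ
    σ = Matrix.transvection (0 : Fin 4) (1 : Fin 4) (1 : ZMod 2) * τ ∧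
    -- (b) σ and τ are conjugate in GL₄(𝔽₂), with common characteristic polynomial X⁴ + X² + 1
    σ.charpoly = X ^ 4 + X ^ 2 + 1 ∧
    τ.charpoly = X ^ 4 + X ^ 2 + 1 ∧
    (∃ ρ : Matrix (Fin 4) (Fin 4) (ZMod 2), IsUnit ρ.det ∧ ρ⁻¹ * σ * ρ = τ) ∧
    -- (c) the characteristic polynomial of σ has no root in 𝔽₂
    (∀ a : ZMod 2, ¬ σ.charpoly.IsRoot a) ∧
    -- consequence: t₁₂(1) is a product of a conjugate of σ and a conjugate of σ⁻¹
    (∃ ρ₁ ρ₂ : Matrix (Fin 4) (Fin 4) (ZMod 2), IsUnit ρ₁.det ∧ IsUnit ρ₂.det ∧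
      Matrix.transvection (0 : Fin 4) (1 : Fin 4) (1 : ZMod 2)
        = (ρ₁⁻¹ * σ * ρ₁) * (ρ₂⁻¹ * σ⁻¹ * ρ₂)) := by
  intro σ τ
  have charpoly_τ₀ : τ₀.charpoly = X ^ 4 + X ^ 2 + 1 := by
    rw [← ρ₀_conj_σ₀, charpoly_nonsing_inv_mul_mul isUnit_det_ρ₀, charpoly_σ₀]
  have transvection_eq : transvection (0 : Fin 4) 1 (1 : ZMod 2) = σ₀ * (ρ₀⁻¹ * σ₀⁻¹ * ρ₀) := by
    refine eq_mul_conj_inv_of_eq_mul_conj isUnit_det_σ₀ isUnit_det_ρ₀ ?_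
    rw [ρ₀_conj_σ₀]
    exact σ₀_eq_transvection_mul_τ₀
  refine ⟨σ₀_eq_transvection_mul_τ₀, charpoly_σ₀, charpoly_τ₀, ⟨ρ₀, isUnit_det_ρ₀, ρ₀_conj_σ₀⟩,
    ?_, ⟨1, ρ₀, by simp, isUnit_det_ρ₀, ?_⟩⟩
  · rw [charpoly_σ₀]
    exact X_pow_four_add_X_sq_add_one_not_isRoot
  · rw [inv_one, mul_one, one_mul]
    exact transvection_eq
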